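/- Let G = (V,E) be a graph with V = {v_1,…,v_n}, and let H be the graph with vertex set V_H = {v_i^1, v_i^2, w_i^1, w_i^2, z_i : i ∈ [n]} and edge set E_H = {w_i^1 v_j^1, w_i^2 v_j^2 : v_j ∈ N_G[v_i]} ∪ {v_i^1 v_j^1, v_i^2 v_j^2, z_i z_j : 1 ≤ i < j ≤ n} ∪ {v_i^1 z_j, v_i^2 z_j : i ∈ [n], j ∈ [n]}. If D* is a dominating set of G of cardinality k, then the set {v_i^1, v_i^2 : v_i ∈ D*} is a semipaired dominating set of H of cardinality 2k (with each v_i^1 semipaired with v_i^2). Consequently, γ_pr2(H) ≤ 2·γ(G). -/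

import Mathlib

/-- `D` is a dominating set of `G`. -/
def IsDomSet {V : Type*} (G : SimpleGraph V) (D : Finset V) : Prop :=
  ∀ v, v ∉ D → ∃ u ∈ D, G.Adj u v

/-- `D` is a semipaired dominating set of `G`: a dominating set that can be partitioned
into 2-element subsets (given by a fixed-point-free involution on `D`) such that the two
vertices in each pair are at distance at most 2 (adjacent or having a common neighbor). -/
def IsSemiPD {V : Type*} (G : SimpleGraph V) (D : Finset V) : Prop :=
  IsDomSet G D ∧ ∃ f : V → V, ∀ v ∈ D, f v ∈ D ∧ f v ≠ v ∧ f (f v) = v ∧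
    (G.Adj v (f v) ∨ ∃ w, G.Adj v w ∧ G.Adj (f v) w)

/-- The domination number `γ(G)`. -/
noncomputable def gamma {V : Type*} (G : SimpleGraph V) : ℕ :=
  sInf {k | ∃ D : Finset V, IsDomSet G D ∧ D.card = k}

/-- The semipaired domination number `γ_pr2(G)`. -/
noncomputable def gammaPr2 {V : Type*} (G : SimpleGraph V) : ℕ :=
  sInf {k | ∃ D : Finset V, IsSemiPD G D ∧ D.card = k}

/-- Vertices of the graph `H` constructed from a graph `G` with `n` vertices:
`V_H = {v_i^1, v_i^2, w_i^1, w_i^2, z_i : i ∈ [n]}`. -/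
inductive WV (n : ℕ) where
  | v1 : Fin n → WV n
  | v2 : Fin n → WV n
  | w1 : Fin n → WV n
  | w2 : Fin n → WV n
  | z : Fin n → WV n
deriving DecidableEq

/-- The defining relation of `H`:
`E_H = {w_i^1 v_j^1, w_i^2 v_j^2 : v_j ∈ N_G[v_i]} ∪
{v_i^1 v_j^1, v_i^2 v_j^2, z_i z_j : i < j} ∪ {v_i^1 z_j, v_i^2 z_j : i, j ∈ [n]}`. -/
def wRel {n : ℕ} (G : SimpleGraph (Fin n)) : WV n → WV n → Prop
  | .w1 i, .v1 j => i = j ∨ G.Adj i j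
  | .w2 i, .v2 j => i = j ∨ G.Adj i j
  | .v1 i, .v1 j => i ≠ j
  | .v2 i, .v2 j => i ≠ j
  | .z i, .z j => i ≠ j
  | .v1 _, .z _ => True
  | .v2 _, .z _ => True
  | _, _ => False

/-- The graph `H` constructed from `G`. -/
def bigW {n : ℕ} (G : SimpleGraph (Fin n)) : SimpleGraph (WV n) :=
  SimpleGraph.fromRel (wRel G)

/-!
If `D` dominates `G`, its two copies `D¹ ∪ D²` dominate `H`: `v_j^ℓ` and `w_j^ℓ` are dominated
through the closed neighbourhood of `v_j` in `G`, and each `z_j` is adjacent to every `v_i^ℓ`.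
The copies `v_i^1`, `v_i^2` are not adjacent but share the neighbour `z_i`, so pairing them makes
`D¹ ∪ D²` a semi-PD-set of size `2|D|`; taking `D` minimum gives `γ_pr2(H) ≤ 2γ(G)`.
-/

section Domination

variable {V : Type*} {G : SimpleGraph V} {D : Finset V}

theorem IsDomSet.exists_mem_eq_or_adj (hD : IsDomSet G D) (v : V) :
    ∃ u ∈ D, u = v ∨ G.Adj u v := by
  by_cases hv : v ∈ D
  · exact ⟨v, hv, .inl rfl⟩
  · obtain ⟨u, hu, huv⟩ := hD v hv
    exact ⟨u, hu, .inr huv⟩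

theorem IsDomSet.nonempty [Nonempty V] (hD : IsDomSet G D) : D.Nonempty :=
  let ⟨u, hu, _⟩ := hD.exists_mem_eq_or_adj (Classical.arbitrary V)
  ⟨u, hu⟩

theorem exists_isDomSet_card_eq_gamma [Fintype V] (G : SimpleGraph V) :
    ∃ D : Finset V, IsDomSet G D ∧ D.card = gamma G :=
  Nat.sInf_mem (s := {k | ∃ D : Finset V, IsDomSet G D ∧ D.card = k})
    ⟨_, Finset.univ, fun v hv => (hv (Finset.mem_univ v)).elim, rfl⟩

theorem gammaPr2_le_card (hD : IsSemiPD G D) : gammaPr2 G ≤ D.card :=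
  Nat.sInf_le ⟨D, hD, rfl⟩

end Domination

namespace WV

variable {n : ℕ}

def swap : WV n → WV n
  | v1 i => v2 i
  | v2 i => v1 i
  | x => x

def copies (D : Finset (Fin n)) : Finset (WV n) :=
  D.image v1 ∪ D.image v2

variable {D : Finset (Fin n)} {i : Fin n}

theorem v1_mem_copies (hi : i ∈ D) : v1 i ∈ copies D :=
  Finset.mem_union_left _ (Finset.mem_image_of_mem _ hi)

theorem v2_mem_copies (hi : i ∈ D) : v2 i ∈ copies D :=
  Finset.mem_union_right _ (Finset.mem_image_of_mem _ hi)

theorem card_copies (D : Finset (Fin n)) : (copies D).card = 2 * D.card := by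
  have hdisj : Disjoint (D.image v1) (D.image v2) := by
    simp [Finset.disjoint_left]
  rw [copies, Finset.card_union_of_disjoint hdisj,
    Finset.card_image_of_injective _ fun _ _ => v1.inj,
    Finset.card_image_of_injective _ fun _ _ => v2.inj, two_mul]

end WV

namespace bigW

open WV

variable {n : ℕ} {G : SimpleGraph (Fin n)} {D : Finset (Fin n)} {i j : Fin n}

@[simp] theorem adj_v1_v1 : (bigW G).Adj (v1 i) (v1 j) ↔ i ≠ j := by
  simp [bigW, wRel, ne_comm]

@[simp] theorem adj_v2_v2 : (bigW G).Adj (v2 i) (v2 j) ↔ i ≠ j := by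
  simp [bigW, wRel, ne_comm]

@[simp] theorem adj_v1_w1 : (bigW G).Adj (v1 i) (w1 j) ↔ i = j ∨ G.Adj i j := by
  simp [bigW, wRel, eq_comm, G.adj_comm]

@[simp] theorem adj_v2_w2 : (bigW G).Adj (v2 i) (w2 j) ↔ i = j ∨ G.Adj i j := by
  simp [bigW, wRel, eq_comm, G.adj_comm]

@[simp] theorem adj_v1_z : (bigW G).Adj (v1 i) (z j) := by
  simp [bigW, wRel]

@[simp] theorem adj_v2_z : (bigW G).Adj (v2 i) (z j) := by
  simp [bigW, wRel]


theorem isDomSet_copies (hD : IsDomSet G D) : IsDomSet (bigW G) (copies D) := by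
  intro x hx
  cases x with
  | v1 j =>
    obtain ⟨u, hu, huj⟩ := hD j fun hj => hx (v1_mem_copies hj)
    exact ⟨v1 u, v1_mem_copies hu, adj_v1_v1.mpr (G.ne_of_adj huj)⟩
  | v2 j =>
    obtain ⟨u, hu, huj⟩ := hD j fun hj => hx (v2_mem_copies hj)
    exact ⟨v2 u, v2_mem_copies hu, adj_v2_v2.mpr (G.ne_of_adj huj)⟩
  | w1 j =>
    obtain ⟨u, hu, huj⟩ := hD.exists_mem_eq_or_adj j
    exact ⟨v1 u, v1_mem_copies hu, adj_v1_w1.mpr huj⟩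
  | w2 j =>
    obtain ⟨u, hu, huj⟩ := hD.exists_mem_eq_or_adj j
    exact ⟨v2 u, v2_mem_copies hu, adj_v2_w2.mpr huj⟩
  | z j =>
    have : Nonempty (Fin n) := ⟨j⟩
    obtain ⟨u, hu⟩ := hD.nonempty
    exact ⟨v1 u, v1_mem_copies hu, adj_v1_z⟩

theorem swap_semipairs_copies : ∀ x ∈ copies D,
    swap x ∈ copies D ∧ swap x ≠ x ∧ swap (swap x) = x ∧
      ((bigW G).Adj x (swap x) ∨ ∃ w, (bigW G).Adj x w ∧ (bigW G).Adj (swap x) w) := by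
  intro x hx
  simp only [copies, Finset.mem_union, Finset.mem_image] at hx
  rcases hx with ⟨i, hi, rfl⟩ | ⟨i, hi, rfl⟩
  · exact ⟨v2_mem_copies hi, nofun, rfl, .inr ⟨z i, adj_v1_z, adj_v2_z⟩⟩
  · exact ⟨v1_mem_copies hi, nofun, rfl, .inr ⟨z i, adj_v2_z, adj_v1_z⟩⟩

end bigW

/-- Let `H` be the graph constructed from `G` in the approximation-hardness reduction.
If `D*` is a dominating set of `G` of cardinality `k`, then
`{v_i^1, v_i^2 : v_i ∈ D*}` is a semipaired dominating set of `H` of cardinality `2k`,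
with each `v_i^1` semipaired with `v_i^2`. Consequently `γ_pr2(H) ≤ 2·γ(G)`. -/
theorem semiPD_of_domSet_bigW {n : ℕ} (G : SimpleGraph (Fin n)) :
    (∀ (Dstar : Finset (Fin n)) (k : ℕ), IsDomSet G Dstar → Dstar.card = k →
      (IsDomSet (bigW G) (Dstar.image WV.v1 ∪ Dstar.image WV.v2) ∧
        ∃ f : WV n → WV n,
          (∀ v ∈ Dstar.image WV.v1 ∪ Dstar.image WV.v2,
            f v ∈ Dstar.image WV.v1 ∪ Dstar.image WV.v2 ∧ f v ≠ v ∧ f (f v) = v ∧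
            ((bigW G).Adj v (f v) ∨ ∃ w, (bigW G).Adj v w ∧ (bigW G).Adj (f v) w)) ∧
          ∀ i ∈ Dstar, f (WV.v1 i) = WV.v2 i) ∧
      (Dstar.image WV.v1 ∪ Dstar.image WV.v2).card = 2 * k) ∧
    gammaPr2 (bigW G) ≤ 2 * gamma G := by
  refine ⟨fun D k hD hk => hk ▸ ⟨⟨bigW.isDomSet_copies hD, WV.swap,
    bigW.swap_semipairs_copies, fun _ _ => rfl⟩, WV.card_copies D⟩, ?_⟩
  obtain ⟨D, hD, hcard⟩ := exists_isDomSet_card_eq_gamma G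
  calc gammaPr2 (bigW G)
      ≤ (WV.copies D).card :=
        gammaPr2_le_card ⟨bigW.isDomSet_copies hD, WV.swap, bigW.swap_semipairs_copies⟩
    _ = 2 * gamma G := by rw [WV.card_copies, hcard]
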